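/- For 1 ≤ r ≤ ⌊n/2⌋, the subspace 𝔪_r of strictly upper triangular n×n matrices spanned by the elementary matrices e_{r,j} and e_{i,n-r+1} for r < i,j < n-r+1 together with e_{r,n-r+1} is a Lie subalgebra, its derived algebra [𝔪_r, 𝔪_r] is contained in the span of e_{r,n-r+1}, and its center equals the span of e_{r,n-r+1} when r < n/2. -/

import Mathlib

open Matrix

/-- Elementary matrix `e_{i,j}` (0-based indices). -/
def elemMat (n : ℕ) (i j : Fin n) : Matrix (Fin n) (Fin n) ℝ :=
  Matrix.single i j 1

/-- The spanning set of the Heisenberg subalgebra `𝔪_r` (with `r` a 1-based index):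
the elementary matrices `e_{r,j}` for `r < j < n-r+1`, the `e_{i,n-r+1}` for
`r < i < n-r+1`, and `e_{r,n-r+1}`.  In 0-based indices these are the positions in
row `r-1` with column in `(r-1, n-r]`, together with the positions in column `n-r`
with row in `(r-1, n-r)`. -/
def mSet (n r : ℕ) : Set (Matrix (Fin n) (Fin n) ℝ) :=
  {X | ∃ i j : Fin n,
    (((i : ℕ) = r - 1 ∧ r - 1 < (j : ℕ) ∧ (j : ℕ) ≤ n - r) ∨
     ((j : ℕ) = n - r ∧ r - 1 < (i : ℕ) ∧ (i : ℕ) < n - r)) ∧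
    X = elemMat n i j}

/-- The subspace `𝔪_r`. -/
def mAlg (n r : ℕ) : Submodule ℝ (Matrix (Fin n) (Fin n) ℝ) :=
  Submodule.span ℝ (mSet n r)

/-!
The only nonzero products of two generators of `𝔪_r` are `e_{r,j} e_{j,n-r+1} = e_{r,n-r+1}`, so
every commutator lies in the span of `e_{r,n-r+1}`, which commutes with all generators.
Conversely, for `X` central in `𝔪_r`, the `(r, n-r+1)` entries of `[X, e_{j,n-r+1}]` and
`[X, e_{r,i}]` are `X_{r,j}` and `-X_{i,n-r+1}`, so these entries vanish for `r < i, j < n-r+1`.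
-/

theorem Submodule.commutator_mem_of_mem_span {R A : Type*} [CommRing R] [Ring A] [Algebra R A]
    {s t : Set A} {S : Submodule R A} (h : ∀ x ∈ s, ∀ y ∈ t, x * y - y * x ∈ S)
    {X Y : A} (hX : X ∈ span R s) (hY : Y ∈ span R t) : X * Y - Y * X ∈ S := by
  let bracket : A →ₗ[R] A →ₗ[R] A := LinearMap.mul R A - (LinearMap.mul R A).flip
  have hle : map₂ bracket (span R s) (span R t) ≤ S := by
    rw [map₂_span_span, span_le]
    rintro _ ⟨x, hx, y, hy, rfl⟩
    exact h x hx y hy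
  exact hle (apply_mem_map₂ bracket hX hY)

namespace Matrix

variable {m n R : Type*} [DecidableEq m] [DecidableEq n]

theorem mem_span_single_one_iff [Semiring R] {X : Matrix m n R} {a : m} {b : n} :
    X ∈ Submodule.span R {single a b (1 : R)} ↔ ∀ i j, X i j ≠ 0 → i = a ∧ j = b := by
  rw [Submodule.mem_span_singleton]
  constructor
  · rintro ⟨c, rfl⟩ i j hij
    by_contra hne
    have hne' : ¬(a = i ∧ b = j) := fun h => hne ⟨h.1.symm, h.2.symm⟩
    exact hij (by rw [smul_single, single_apply_of_ne _ _ _ _ _ hne'])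
  · intro h
    refine ⟨X a b, ext fun i j => ?_⟩
    by_cases hij : a = i ∧ b = j
    · obtain ⟨rfl, rfl⟩ := hij
      simp
    · rw [smul_single, single_apply_of_ne _ _ _ _ _ hij, eq_comm]
      exact not_imp_comm.mp (h i j) fun h => hij ⟨h.1.symm, h.2.symm⟩

theorem apply_eq_zero_of_mem_span_single [Semiring R] {P : m → n → Prop} {X : Matrix m n R}
    (hX : X ∈ Submodule.span R {A | ∃ i j, P i j ∧ A = single i j 1}) {i : m} {j : n}
    (h : ¬P i j) : X i j = 0 := by
  have hle : Submodule.span R {A | ∃ i j, P i j ∧ A = single i j 1} ≤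
      LinearMap.ker (entryLinearMap R R i j) := by
    rw [Submodule.span_le]
    rintro _ ⟨k, l, hkl, rfl⟩
    have : ¬(k = i ∧ l = j) := fun ⟨hk, hl⟩ => h (hk ▸ hl ▸ hkl)
    simp [this]
  exact hle hX

end Matrix

/-- `mSet n r` is by definition the set of `elemMat n i j` with `IsMPos n r i j`. -/
def IsMPos (n r : ℕ) (i j : Fin n) : Prop :=
  ((i : ℕ) = r - 1 ∧ r - 1 < (j : ℕ) ∧ (j : ℕ) ≤ n - r) ∨
    ((j : ℕ) = n - r ∧ r - 1 < (i : ℕ) ∧ (i : ℕ) < n - r)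

theorem elemMat_mem_mAlg {n r : ℕ} {i j : Fin n} (h : IsMPos n r i j) :
    elemMat n i j ∈ mAlg n r :=
  Submodule.subset_span ⟨i, j, h, rfl⟩

theorem elemMat_mul_elemMat_mem_span {n r : ℕ} {a b : Fin n} (ha : (a : ℕ) = r - 1)
    (hb : (b : ℕ) = n - r) {i j k l : Fin n} (hij : IsMPos n r i j) (hkl : IsMPos n r k l) :
    elemMat n i j * elemMat n k l ∈ Submodule.span ℝ {elemMat n a b} := by
  unfold elemMat
  by_cases hjk : j = k
  · subst hjk
    obtain ⟨rfl, rfl⟩ : i = a ∧ l = b := by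
      simp only [IsMPos, Fin.ext_iff] at *
      omega
    rw [single_mul_single_same, one_mul]
    exact Submodule.mem_span_singleton_self _
  · rw [single_mul_single_of_ne _ _ _ _ hjk]
    exact zero_mem _

theorem mAlg_commutator_mem_span {n r : ℕ} {a b : Fin n} (ha : (a : ℕ) = r - 1)
    (hb : (b : ℕ) = n - r) {X Y : Matrix (Fin n) (Fin n) ℝ} (hX : X ∈ mAlg n r)
    (hY : Y ∈ mAlg n r) : X * Y - Y * X ∈ Submodule.span ℝ {elemMat n a b} := by
  refine Submodule.commutator_mem_of_mem_span ?_ hX hY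
  rintro _ ⟨i, j, hij, rfl⟩ _ ⟨k, l, hkl, rfl⟩
  exact sub_mem (elemMat_mul_elemMat_mem_span ha hb hij hkl)
    (elemMat_mul_elemMat_mem_span ha hb hkl hij)

theorem commutator_eq_zero_of_mem_span_elemMat {n r : ℕ} {a b : Fin n} (ha : (a : ℕ) = r - 1)
    (hb : (b : ℕ) = n - r) {X Y : Matrix (Fin n) (Fin n) ℝ}
    (hX : X ∈ Submodule.span ℝ {elemMat n a b}) (hY : Y ∈ mAlg n r) : X * Y - Y * X = 0 := by
  rw [← Submodule.mem_bot ℝ]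
  refine Submodule.commutator_mem_of_mem_span ?_ hX hY
  rintro _ rfl _ ⟨i, j, hij, rfl⟩
  have hbi : b ≠ i := fun h => by simp only [Fin.ext_iff] at h; omega
  have hja : j ≠ a := fun h => by simp only [Fin.ext_iff] at h; omega
  simp [elemMat, single_mul_single_of_ne _ _ _ _ hbi, single_mul_single_of_ne _ _ _ _ hja]

theorem mem_span_elemMat_of_commute {n r : ℕ} {a b : Fin n} (ha : (a : ℕ) = r - 1)
    (hb : (b : ℕ) = n - r) {X : Matrix (Fin n) (Fin n) ℝ} (hX : X ∈ mAlg n r)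
    (hc : ∀ Y ∈ mAlg n r, X * Y - Y * X = 0) : X ∈ Submodule.span ℝ {elemMat n a b} := by
  rw [elemMat, mem_span_single_one_iff]
  intro i j hXij
  have hpos : IsMPos n r i j := by
    by_contra h
    exact hXij (apply_eq_zero_of_mem_span_single hX h)
  have hcomm {k l : Fin n} (hkl : IsMPos n r k l) :
      (X * elemMat n k l - elemMat n k l * X) a b = 0 := by
    rw [hc _ (elemMat_mem_mAlg hkl)]
    rfl
  rcases hpos with ⟨hi, hj, hjb⟩ | ⟨hj, hi, hib⟩
  · obtain rfl : i = a := Fin.ext (hi.trans ha.symm)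
    refine ⟨rfl, Fin.ext ?_⟩
    by_contra hjb'
    have hij : i ≠ j := fun h => by simp only [Fin.ext_iff] at h; omega
    have h := hcomm (k := j) (l := b) (Or.inr ⟨hb, hj, by omega⟩)
    rw [Matrix.sub_apply, elemMat, mul_single_apply_same, mul_one,
      single_mul_apply_of_ne _ _ _ _ _ hij, sub_zero] at h
    exact absurd h hXij
  · obtain rfl : j = b := Fin.ext (hj.trans hb.symm)
    have hbi : j ≠ i := fun h => by simp only [Fin.ext_iff] at h; omega
    have h := hcomm (k := a) (l := i) (Or.inl ⟨ha, hi, hib.le⟩)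
    rw [Matrix.sub_apply, elemMat, single_mul_apply_same, one_mul,
      mul_single_apply_of_ne _ _ _ _ _ hbi, zero_sub, neg_eq_zero] at h
    exact absurd h hXij

theorem mAlg_subalgebra_derived_center (n r : ℕ) (hr : 1 ≤ r) (hrn : 2 * r ≤ n) :
    (∀ X ∈ mAlg n r, ∀ Y ∈ mAlg n r, X * Y - Y * X ∈ mAlg n r) ∧
    (∀ X ∈ mAlg n r, ∀ Y ∈ mAlg n r,
      X * Y - Y * X ∈
        Submodule.span ℝ {elemMat n ⟨r - 1, by omega⟩ ⟨n - r, by omega⟩}) ∧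
    (2 * r < n →
      ∀ X : Matrix (Fin n) (Fin n) ℝ,
        (X ∈ mAlg n r ∧ ∀ Y ∈ mAlg n r, X * Y - Y * X = 0) ↔
          X ∈ Submodule.span ℝ {elemMat n ⟨r - 1, by omega⟩ ⟨n - r, by omega⟩}) := by
  set a : Fin n := ⟨r - 1, by omega⟩
  set b : Fin n := ⟨n - r, by omega⟩
  have hderived X (hX : X ∈ mAlg n r) Y (hY : Y ∈ mAlg n r) :
      X * Y - Y * X ∈ Submodule.span ℝ {elemMat n a b} :=
    mAlg_commutator_mem_span rfl rfl hX hY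
  have hle : Submodule.span ℝ {elemMat n a b} ≤ mAlg n r :=
    (Submodule.span_singleton_le_iff_mem _ _).2
      (elemMat_mem_mAlg (Or.inl ⟨rfl, show r - 1 < n - r by omega, le_rfl⟩))
  refine ⟨fun X hX Y hY => hle (hderived X hX Y hY), hderived, fun _ X => ⟨?_, ?_⟩⟩
  · rintro ⟨hX, hc⟩
    exact mem_span_elemMat_of_commute rfl rfl hX hc
  · intro hX
    exact ⟨hle hX, fun Y hY => commutator_eq_zero_of_mem_span_elemMat rfl rfl hX hY⟩
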